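/- Let $\bar\rho:[0,R]\to\mathbb R$ be $C^2$ and $\chi:[0,R]\to\mathbb R$ be $C^2$ with $\chi'(R)=0$, and let $l\ge 1$. Suppose $\bar\rho$ satisfies $\gamma(r^2\bar\rho^{\gamma-2}\bar\rho')' + 4\pi r^2\bar\rho = 0$. Then, assuming all boundary terms at $r=0$ vanish, the identity $\int_0^R\big(\gamma\bar\rho^{\gamma-2}((\bar\rho\chi)')^2 - 4\pi(\bar\rho\chi)^2\big)r^{2l}\,dr - \gamma\bar\rho'(R)\chi(R)^2 R^{2l} = \int_0^R\big(\gamma\bar\rho^\gamma(\chi')^2 r^{2l} - 2(l-1)(\bar\rho^\gamma)'\chi^2 r^{2l-1}\big)dr$ holds. -/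

import Mathlib

/-!
Write `G = γ r² ρ^{γ-2} ρ'`, so that the equation reads `G' = -4π r² ρ`. The product rule applied
to `G · r^{2l-2} ρ χ²` produces exactly the difference of the two integrands, so the identity is the
fundamental theorem of calculus for this product on `(0, R]`: it vanishes at `0⁺` by assumption,
and at `R` it equals `γ ρ'(R) χ(R)² R^{2l}` because `ρ(R) = 1`.
-/

open Real Set Filter MeasureTheory intervalIntegral
open scoped Topology

lemma Real.rpow_sub_two {x : ℝ} (hx : x ≠ 0) (y : ℝ) : x ^ (y - 2) = x ^ y / x ^ 2 := by
  exact_mod_cast rpow_sub_natCast hx y 2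

lemma zpow_two_mul_sub {r : ℝ} (hr : r ≠ 0) (l : ℕ) (k : ℤ) :
    r ^ (2 * l - k) = r ^ (2 * l) / r ^ k := by
  rw [zpow_sub₀ hr]; norm_cast

lemma hasDerivAt_of_deriv_eq_of_ne_zero {f : ℝ → ℝ} {x c : ℝ} (h : deriv f x = c) (hc : c ≠ 0) :
    HasDerivAt f c x :=
  h ▸ (differentiableAt_of_deriv_ne_zero (h ▸ hc)).hasDerivAt

lemma DifferentiableOn.hasDerivAt_derivWithin_Icc {f : ℝ → ℝ} {a b : ℝ}
    (hf : DifferentiableOn ℝ f (Icc a b)) {x : ℝ} (hx : x ∈ Ioo a b) :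
    HasDerivAt f (derivWithin f (Icc a b) x) x :=
  (hf x (Ioo_subset_Icc_self hx)).hasDerivWithinAt.hasDerivAt (Icc_mem_nhds hx.1 hx.2)

/-- The integrand on the left, `(γ ρ^{γ-2} ((ρχ)')² - 4π (ρχ)²) r^{2l}`, as a function of the
values `p = ρ r`, `p' = ρ' r`, `c = χ r`, `c' = χ' r`. -/
noncomputable def modeEnergyDensity₁ (γ : ℝ) (l : ℕ) (r p p' c c' : ℝ) : ℝ :=
  (γ * p ^ (γ - 2) * (p' * c + p * c') ^ 2 - 4 * π * (p * c) ^ 2) * r ^ (2 * l)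

/-- The integrand on the right, `γ ρ^γ χ'² r^{2l} - 2(l-1) (ρ^γ)' χ² r^{2l-1}`, in the same
variables. -/
noncomputable def modeEnergyDensity₂ (γ : ℝ) (l : ℕ) (r p p' c c' : ℝ) : ℝ :=
  γ * p ^ γ * c' ^ 2 * r ^ (2 * l)
    - 2 * ((l : ℝ) - 1) * (p' * γ * p ^ (γ - 1)) * c ^ 2 * r ^ (2 * l - 1 : ℤ)

section

variable {γ r ρ' χ' : ℝ} {l : ℕ} {ρ χ G : ℝ → ℝ}

lemma modeEnergyDensity₁_eq (hρ : HasDerivAt ρ ρ' r) (hχ : HasDerivAt χ χ' r) :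
    (γ * ρ r ^ (γ - 2) * (deriv (fun s => ρ s * χ s) r) ^ 2 - 4 * π * (ρ r * χ r) ^ 2)
        * r ^ (2 * l) = modeEnergyDensity₁ γ l r (ρ r) ρ' (χ r) χ' := by
  rw [deriv_fun_mul hρ.differentiableAt hχ.differentiableAt, hρ.deriv, hχ.deriv,
    modeEnergyDensity₁]

lemma modeEnergyDensity₂_eq (hρr : ρ r ≠ 0) (hρ : HasDerivAt ρ ρ' r) (hχ : HasDerivAt χ χ' r) :
    γ * ρ r ^ γ * (deriv χ r) ^ 2 * r ^ (2 * l)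
        - 2 * ((l : ℝ) - 1) * deriv (fun s => ρ s ^ γ) r * χ r ^ 2 * r ^ (2 * l - 1 : ℤ)
      = modeEnergyDensity₂ γ l r (ρ r) ρ' (χ r) χ' := by
  rw [hχ.deriv, (hρ.rpow_const (.inl hρr)).deriv, modeEnergyDensity₂]

lemma flux_mul_weight_eq (l : ℕ) {p p' c : ℝ} (hr : r ≠ 0) (hp : p ≠ 0) :
    γ * (r ^ 2 * (p ^ (γ - 2) * p')) * (r ^ (2 * l - 2 : ℤ) * (p * c ^ 2))
      = γ * (r ^ (2 * l) * p ^ (γ - 1) * p' * c ^ 2) := by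
  rw [zpow_two_mul_sub hr, rpow_sub_two hp, rpow_sub_one hp, zpow_ofNat]
  field_simp

lemma hasDerivAt_flux_mul_weight (l : ℕ) (hr : r ≠ 0) (hρr : ρ r ≠ 0)
    (hρ : HasDerivAt ρ ρ' r) (hχ : HasDerivAt χ χ' r)
    (hG : HasDerivAt G (-(4 * π * r ^ 2 * ρ r)) r)
    (hGr : G r = γ * (r ^ 2 * (ρ r ^ (γ - 2) * ρ'))) :
    HasDerivAt (fun s => G s * (s ^ (2 * l - 2 : ℤ) * (ρ s * χ s ^ 2)))
      (modeEnergyDensity₁ γ l r (ρ r) ρ' (χ r) χ'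
        - modeEnergyDensity₂ γ l r (ρ r) ρ' (χ r) χ') r := by
  refine (hG.mul ((hasDerivAt_zpow (2 * l - 2) r (.inl hr)).mul
    (hρ.mul (hχ.pow 2)))).congr_deriv ?_
  simp only [Pi.mul_apply, Pi.pow_apply, modeEnergyDensity₁, modeEnergyDensity₂, hGr, sub_sub,
    zpow_two_mul_sub hr, rpow_sub_two hρr, rpow_sub_one hρr]
  push_cast
  field_simp
  ring

end

section

variable {R γ : ℝ} {l : ℕ} {ρ χ ρ' χ' G : ℝ → ℝ} {s : Set ℝ}

lemma continuousOn_modeEnergyDensity₁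
    (hρ : ContinuousOn ρ s) (hρ0 : ∀ r ∈ s, ρ r ≠ 0) (hρ' : ContinuousOn ρ' s)
    (hχ : ContinuousOn χ s) (hχ' : ContinuousOn χ' s) :
    ContinuousOn (fun r => modeEnergyDensity₁ γ l r (ρ r) (ρ' r) (χ r) (χ' r)) s := by
  have := hρ.rpow_const (p := γ - 2) fun r hr => .inl (hρ0 r hr)
  unfold modeEnergyDensity₁
  fun_prop

lemma continuousOn_modeEnergyDensity₂ (hl : 1 ≤ l)
    (hρ : ContinuousOn ρ s) (hρ0 : ∀ r ∈ s, ρ r ≠ 0) (hρ' : ContinuousOn ρ' s)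
    (hχ : ContinuousOn χ s) (hχ' : ContinuousOn χ' s) :
    ContinuousOn (fun r => modeEnergyDensity₂ γ l r (ρ r) (ρ' r) (χ r) (χ' r)) s := by
  have := hρ.rpow_const (p := γ) fun r hr => .inl (hρ0 r hr)
  have := hρ.rpow_const (p := γ - 1) fun r hr => .inl (hρ0 r hr)
  unfold modeEnergyDensity₂
  fun_prop (disch := omega)

theorem integral_modeEnergyDensity₁_sub_integral_modeEnergyDensity₂ (hR : 0 < R) (hl : 1 ≤ l)
    (hρ : ContinuousOn ρ (Icc 0 R)) (hρ0 : ∀ r ∈ Icc 0 R, ρ r ≠ 0)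
    (hρ'c : ContinuousOn ρ' (Icc 0 R)) (hχ : ContinuousOn χ (Icc 0 R))
    (hχ'c : ContinuousOn χ' (Icc 0 R))
    (hρ' : ∀ r ∈ Ioo 0 R, HasDerivAt ρ (ρ' r) r) (hχ' : ∀ r ∈ Ioo 0 R, HasDerivAt χ (χ' r) r)
    (hG : ∀ r ∈ Ioc 0 R, HasDerivAt G (-(4 * π * r ^ 2 * ρ r)) r)
    (hGr : ∀ r ∈ Ioo 0 R, G r = γ * (r ^ 2 * (ρ r ^ (γ - 2) * ρ' r)))
    (hG0 : Tendsto (fun s => G s * (s ^ (2 * l - 2 : ℤ) * (ρ s * χ s ^ 2))) (𝓝[>] 0) (𝓝 0)) :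
    (∫ r in 0..R, modeEnergyDensity₁ γ l r (ρ r) (ρ' r) (χ r) (χ' r))
      - ∫ r in 0..R, modeEnergyDensity₂ γ l r (ρ r) (ρ' r) (χ r) (χ' r)
      = G R * (R ^ (2 * l - 2 : ℤ) * (ρ R * χ R ^ 2)) := by
  have h₁ := (continuousOn_modeEnergyDensity₁ (γ := γ) (l := l) hρ hρ0 hρ'c hχ hχ'c)
    |>.intervalIntegrable_of_Icc (μ := volume) hR.le
  have h₂ := (continuousOn_modeEnergyDensity₂ (γ := γ) hl hρ hρ0 hρ'c hχ hχ'c)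
    |>.intervalIntegrable_of_Icc (μ := volume) hR.le
  have hu : ContinuousOn (fun s => s ^ (2 * l - 2 : ℤ) * (ρ s * χ s ^ 2)) (Icc 0 R) := by
    fun_prop (disch := omega)
  have hGR : Tendsto (fun s => G s * (s ^ (2 * l - 2 : ℤ) * (ρ s * χ s ^ 2))) (𝓝[<] R)
      (𝓝 (G R * (R ^ (2 * l - 2 : ℤ) * (ρ R * χ R ^ 2)))) := by
    rw [← nhdsWithin_Ioo_eq_nhdsLT hR]
    exact (((hG R ⟨hR, le_rfl⟩).continuousAt.continuousWithinAt.mul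
      (hu R ⟨hR.le, le_rfl⟩)).mono Ioo_subset_Icc_self).tendsto
  rw [← integral_sub h₁ h₂, ← sub_zero (G R * _)]
  exact integral_eq_sub_of_hasDerivAt_of_tendsto hR (fun r hr => hasDerivAt_flux_mul_weight l
    hr.1.ne' (hρ0 r (Ioo_subset_Icc_self hr)) (hρ' r hr) (hχ' r hr) (hG r (Ioo_subset_Ioc_self hr))
    (hGr r hr)) (h₁.sub h₂) hG0 hGR

end

theorem mode_energy_integration_by_parts_general
    (R γ : ℝ) (hR : 0 < R) (l : ℕ) (hl : 1 ≤ l)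
    (ρ χ : ℝ → ℝ)
    (hρ : ContDiffOn ℝ 2 ρ (Icc 0 R)) (hχ : ContDiffOn ℝ 2 χ (Icc 0 R))
    (hρpos : ∀ r ∈ Icc (0:ℝ) R, 0 < ρ r) (hρR : ρ R = 1)
    (hODE : ∀ r ∈ Ioc (0:ℝ) R,
      deriv (fun s => γ * (s ^ 2 * (ρ s ^ (γ - 2) * deriv ρ s))) r
        + 4 * π * r ^ 2 * ρ r = 0)
    (hbdry : Tendsto (fun r => r ^ (2 * l) * ρ r ^ (γ - 1) * deriv ρ r * χ r ^ 2)
      (nhdsWithin 0 (Ioi 0)) (nhds 0)) :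
    (∫ r in (0:ℝ)..R,
        (γ * ρ r ^ (γ - 2) * (deriv (fun s => ρ s * χ s) r) ^ 2
          - 4 * π * (ρ r * χ r) ^ 2) * r ^ (2 * l))
      - γ * deriv ρ R * χ R ^ 2 * R ^ (2 * l)
    = ∫ r in (0:ℝ)..R,
        (γ * ρ r ^ γ * (deriv χ r) ^ 2 * r ^ (2 * l)
          - 2 * ((l : ℝ) - 1) * deriv (fun s => ρ s ^ γ) r * χ r ^ 2 * r ^ (2 * l - 1 : ℤ)) := by
  have hρ' r (hr : r ∈ Ioo 0 R) := (hρ.differentiableOn two_ne_zero).hasDerivAt_derivWithin_Icc hr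
  have hχ' r (hr : r ∈ Ioo 0 R) := (hχ.differentiableOn two_ne_zero).hasDerivAt_derivWithin_Icc hr
  have hρ0 r (hr : r ∈ Icc 0 R) : ρ r ≠ 0 := (hρpos r hr).ne'
  have hG r (hr : r ∈ Ioc 0 R) : HasDerivAt (fun s => γ * (s ^ 2 * (ρ s ^ (γ - 2) * deriv ρ s)))
      (-(4 * π * r ^ 2 * ρ r)) r := by
    refine hasDerivAt_of_deriv_eq_of_ne_zero (eq_neg_of_add_eq_zero_left (hODE r hr)) ?_
    exact neg_ne_zero.2 (mul_pos (mul_pos (by positivity) (pow_pos hr.1 2))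
      (hρpos r (Ioc_subset_Icc_self hr))).ne'
  have hG0 : Tendsto (fun s => γ * (s ^ 2 * (ρ s ^ (γ - 2) * deriv ρ s))
      * (s ^ (2 * l - 2 : ℤ) * (ρ s * χ s ^ 2))) (𝓝[>] 0) (𝓝 0) := by
    have := hbdry.const_mul γ
    rw [mul_zero] at this
    refine this.congr' ?_
    filter_upwards [Ioo_mem_nhdsGT hR] with r hr
    exact (flux_mul_weight_eq l hr.1.ne' (hρ0 r (Ioo_subset_Icc_self hr))).symm
  have key := integral_modeEnergyDensity₁_sub_integral_modeEnergyDensity₂ hR hl hρ.continuousOn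
    hρ0 (hρ.continuousOn_derivWithin (uniqueDiffOn_Icc hR) one_le_two) hχ.continuousOn
    (hχ.continuousOn_derivWithin (uniqueDiffOn_Icc hR) one_le_two) hρ' hχ' hG
    (fun r hr => by rw [(hρ' r hr).deriv]) hG0
  rw [flux_mul_weight_eq l hR.ne' (hρ0 R ⟨hR.le, le_rfl⟩), hρR, one_rpow] at key
  rw [integral_congr_Ioo_of_le hR.le fun r hr => modeEnergyDensity₁_eq (hρ' r hr) (hχ' r hr),
    integral_congr_Ioo_of_le hR.le fun r hr =>
      modeEnergyDensity₂_eq (hρ0 r (Ioo_subset_Icc_self hr)) (hρ' r hr) (hχ' r hr)]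
  linarith

/-- the key integration-by-parts identity converting the mode-`l`
energy from the `(ρ̄χ)'` form to the manifestly sign-definite `χ'` form. -/
theorem mode_energy_integration_by_parts
    (R γ : ℝ) (hR : 0 < R) (l : ℕ) (hl : 1 ≤ l)
    (ρ χ : ℝ → ℝ)
    (hρ : ContDiffOn ℝ 2 ρ (Icc 0 R)) (hχ : ContDiffOn ℝ 2 χ (Icc 0 R))
    (hρpos : ∀ r ∈ Icc (0:ℝ) R, 0 < ρ r) (hρR : ρ R = 1)
    (hχR : deriv χ R = 0)
    (hODE : ∀ r ∈ Ioc (0:ℝ) R,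
      deriv (fun s => γ * (s ^ 2 * (ρ s ^ (γ - 2) * deriv ρ s))) r
        + 4 * π * r ^ 2 * ρ r = 0)
    (hbdry : Tendsto (fun r => r ^ (2 * l) * ρ r ^ (γ - 1) * deriv ρ r * χ r ^ 2)
      (nhdsWithin 0 (Ioi 0)) (nhds 0)) :
    (∫ r in (0:ℝ)..R,
        (γ * ρ r ^ (γ - 2) * (deriv (fun s => ρ s * χ s) r) ^ 2
          - 4 * π * (ρ r * χ r) ^ 2) * r ^ (2 * l))
      - γ * deriv ρ R * χ R ^ 2 * R ^ (2 * l)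
    = ∫ r in (0:ℝ)..R,
        (γ * ρ r ^ γ * (deriv χ r) ^ 2 * r ^ (2 * l)
          - 2 * ((l : ℝ) - 1) * deriv (fun s => ρ s ^ γ) r * χ r ^ 2 * r ^ (2 * l - 1 : ℤ)) :=
  mode_energy_integration_by_parts_general R γ hR l hl ρ χ hρ hχ hρpos hρR hODE hbdry
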